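/- Every nonempty irreducible closed subset X of the terminal space S(M) has a unique generic point: there exists a unique I ∈ S(M) such that X equals the closure of the singleton {I} in the terminal space. -/

import Mathlib

/-- An ideal of a commutative monoid `M`: a subset closed under
multiplication by arbitrary elements of `M`. -/
def IsIdealM {M : Type*} [CommMonoid M] (I : Set M) : Prop :=
  ∀ x ∈ I, ∀ m : M, x * m ∈ I

/-- A strongly irreducible ideal: a proper ideal `I` such that for all ideals
`J`, `K`, if `J ∩ K ⊆ I` then `J ⊆ I` or `K ⊆ I`. -/
def IsStronglyIrr {M : Type*} [CommMonoid M] (I : Set M) : Prop :=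
  IsIdealM I ∧ I ≠ Set.univ ∧
    ∀ J K : Set M, IsIdealM J → IsIdealM K → J ∩ K ⊆ I → J ⊆ I ∨ K ⊆ I

/-- A prime ideal of a commutative monoid. -/
def IsPrimeIdealM {M : Type*} [CommMonoid M] (P : Set M) : Prop :=
  IsIdealM P ∧ P ≠ Set.univ ∧ ∀ x y : M, x * y ∈ P → x ∈ P ∨ y ∈ P

/-- A maximal ideal of a commutative monoid: a proper ideal maximal among
proper ideals. -/
def IsMaximalIdealM {M : Type*} [CommMonoid M] (I : Set M) : Prop :=
  IsIdealM I ∧ I ≠ Set.univ ∧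
    ∀ J : Set M, IsIdealM J → J ≠ Set.univ → I ⊆ J → J = I

/-- `SIr M` is the set (type) of strongly irreducible ideals of `M`. -/
structure SIr (M : Type*) [CommMonoid M] where
  carrier : Set M
  strongly_irr : IsStronglyIrr carrier

namespace SIr

variable {M : Type*} [CommMonoid M]

@[ext] theorem ext {I J : SIr M} (h : I.carrier = J.carrier) : I = J := by
  cases I; cases J; simpa using h

/-- `KK X = ⋂_{I ∈ X} I`, the kernel of a set of strongly irreducible ideals. -/
def KK (X : Set (SIr M)) : Set M := ⋂ I ∈ X, I.carrier

/-- The hull-kernel operator `HK`: for nonempty `X`,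
`HK X = {J ∈ S(M) : K(X) ⊆ J}`, and `HK ∅ = ∅`. -/
def HK (X : Set (SIr M)) : Set (SIr M) :=
  {J : SIr M | X.Nonempty ∧ KK X ⊆ J.carrier}

theorem HK_empty : HK (∅ : Set (SIr M)) = ∅ := by
  ext J
  simp [HK, Set.not_nonempty_empty]

theorem mem_HK_of_nonempty {X : Set (SIr M)} (hX : X.Nonempty) {J : SIr M} :
    J ∈ HK X ↔ KK X ⊆ J.carrier :=
  ⟨fun h => h.2, fun h => ⟨hX, h⟩⟩

theorem KK_antitone {X X' : Set (SIr M)} (h : X ⊆ X') : KK X' ⊆ KK X := by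
  intro m hm
  simp only [KK, Set.mem_iInter] at hm ⊢
  exact fun I hI => hm I (h hI)

theorem KK_isIdeal (X : Set (SIr M)) : IsIdealM (KK X) := by
  intro x hx m
  simp only [KK, Set.mem_iInter] at hx ⊢
  exact fun I hI => I.strongly_irr.1 x (hx I hI) m

theorem subset_HK (X : Set (SIr M)) : X ⊆ HK X := by
  intro J hJ
  refine ⟨⟨J, hJ⟩, fun m hm => ?_⟩
  simp only [KK, Set.mem_iInter] at hm
  exact hm J hJ

theorem HK_mono {X X' : Set (SIr M)} (h : X ⊆ X') : HK X ⊆ HK X' := by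
  rintro J ⟨hne, hsub⟩
  exact ⟨hne.mono h, (KK_antitone h).trans hsub⟩

theorem HK_idem (X : Set (SIr M)) : HK (HK X) = HK X := by
  refine Set.Subset.antisymm ?_ (subset_HK _)
  rintro J ⟨hne, hsub⟩
  obtain ⟨I, hI⟩ := hne
  refine ⟨hI.1, Set.Subset.trans ?_ hsub⟩
  intro m hm
  simp only [KK, Set.mem_iInter]
  exact fun L hL => hL.2 hm

theorem HK_union (X X' : Set (SIr M)) : HK (X ∪ X') = HK X ∪ HK X' := by
  rcases X.eq_empty_or_nonempty with rfl | hX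
  · rw [Set.empty_union, HK_empty, Set.empty_union]
  rcases X'.eq_empty_or_nonempty with rfl | hX'
  · rw [Set.union_empty, HK_empty, Set.union_empty]
  refine Set.Subset.antisymm ?_
    (Set.union_subset (HK_mono Set.subset_union_left)
      (HK_mono Set.subset_union_right))
  rintro J ⟨-, hsub⟩
  have hKK : KK X ∩ KK X' ⊆ J.carrier := by
    refine Set.Subset.trans ?_ hsub
    intro m hm
    simp only [KK, Set.mem_iInter, Set.mem_inter_iff] at hm ⊢
    rintro I (hI | hI)
    · exact hm.1 I hI
    · exact hm.2 I hI
  rcases J.strongly_irr.2.2 (KK X) (KK X') (KK_isIdeal X) (KK_isIdeal X') hKK with h | h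
  · exact Or.inl ⟨hX, h⟩
  · exact Or.inr ⟨hX', h⟩

/-- The terminal-space (Zariski) topology on `SIr M`: the closed sets are
exactly the sets of the form `HK X`. -/
instance instTopologicalSpace : TopologicalSpace (SIr M) :=
  TopologicalSpace.ofClosed (Set.range HK)
    ⟨∅, HK_empty⟩
    (fun A hA => by
      refine ⟨⋂₀ A, Set.Subset.antisymm (Set.subset_sInter fun C hC => ?_) (subset_HK _)⟩
      obtain ⟨Y, hY⟩ := hA hC
      calc HK (⋂₀ A) ⊆ HK C := HK_mono (Set.sInter_subset_of_mem hC)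
        _ = HK (HK Y) := by rw [hY]
        _ = HK Y := HK_idem Y
        _ = C := hY)
    (fun A hA B hB => by
      obtain ⟨Y, hY⟩ := hA
      obtain ⟨Z, hZ⟩ := hB
      exact ⟨Y ∪ Z, by rw [HK_union, hY, hZ]⟩)

theorem isClosed_iff {C : Set (SIr M)} : IsClosed C ↔ ∃ X, HK X = C := by
  rw [← isOpen_compl_iff]
  show Cᶜᶜ ∈ Set.range HK ↔ _
  rw [compl_compl]
  exact Iff.rfl

end SIr

/-!
The closure of a set of strongly irreducible ideals is the hull of its kernel, so specialization
in the terminal space is inclusion of ideals and the space is T₀. If `X` is irreducible, a cover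
`J ∩ K ⊆ K(X)` by ideals splits `X` into the two closed sets of points containing `J`, resp. `K`;
irreducibility puts `X` inside one of them, so `K(X)` is itself strongly irreducible, and it is
then a generic point of the closure of `X`. Hence the terminal space is sober.
-/

namespace SIr

variable {M : Type*} [CommMonoid M]

theorem isClosed_HK (X : Set (SIr M)) : IsClosed (HK X) :=
  isClosed_iff.2 ⟨X, rfl⟩

theorem closure_eq_HK (X : Set (SIr M)) : closure X = HK X := by
  refine (closure_minimal (subset_HK X) (isClosed_HK X)).antisymm ?_
  obtain ⟨Y, hY⟩ := isClosed_iff.1 (isClosed_closure (s := X))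
  calc HK X ⊆ HK (HK Y) := HK_mono (hY ▸ subset_closure)
    _ = closure X := by rw [HK_idem, hY]

theorem KK_subset_of_mem {X : Set (SIr M)} {I : SIr M} (h : I ∈ X) : KK X ⊆ I.carrier :=
  Set.biInter_subset_of_mem h

theorem subset_KK_iff {A : Set M} {X : Set (SIr M)} : A ⊆ KK X ↔ ∀ I ∈ X, A ⊆ I.carrier :=
  Set.subset_iInter₂_iff

theorem KK_singleton (I : SIr M) : KK {I} = I.carrier := by
  simp [KK]

theorem KK_HK (X : Set (SIr M)) : KK (HK X) = KK X :=
  (KK_antitone (subset_HK X)).antisymm (subset_KK_iff.2 fun _ hJ => hJ.2)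

theorem KK_subset_KK_of_subset_closure {X Y : Set (SIr M)} (h : X ⊆ closure Y) : KK Y ⊆ KK X := by
  rw [closure_eq_HK] at h
  exact KK_HK Y ▸ KK_antitone h

theorem mem_closure_singleton_iff {I J : SIr M} : J ∈ closure {I} ↔ I.carrier ⊆ J.carrier := by
  rw [closure_eq_HK, mem_HK_of_nonempty (Set.singleton_nonempty I), KK_singleton]

theorem specializes_iff_subset {I J : SIr M} : I ⤳ J ↔ I.carrier ⊆ J.carrier :=
  specializes_iff_mem_closure.trans mem_closure_singleton_iff

instance : T0Space (SIr M) :=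
  (t0Space_iff_inseparable _).2 fun _ _ h => ext <|
    (specializes_iff_subset.1 h.specializes).antisymm (specializes_iff_subset.1 h.specializes')

theorem isStronglyIrr_KK {X : Set (SIr M)} (hX : IsIrreducible X) : IsStronglyIrr (KK X) := by
  refine ⟨KK_isIdeal X, fun h => ?_, fun J K hJ hK hJK => ?_⟩
  · obtain ⟨I, hI⟩ := hX.nonempty
    exact I.strongly_irr.2.1 (Set.univ_subset_iff.1 (h ▸ KK_subset_of_mem hI))
  have subset_of_cover (A : Set M) (hA : X ⊆ closure {L ∈ X | A ⊆ L.carrier}) : A ⊆ KK X :=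
    (subset_KK_iff.2 fun _ hL => hL.2).trans (KK_subset_KK_of_subset_closure hA)
  have hcover : X ⊆ closure {L ∈ X | J ⊆ L.carrier} ∪ closure {L ∈ X | K ⊆ L.carrier} := by
    intro L hL
    rcases L.strongly_irr.2.2 J K hJ hK (hJK.trans (KK_subset_of_mem hL)) with hJL | hKL
    · exact Or.inl (subset_closure ⟨hL, hJL⟩)
    · exact Or.inr (subset_closure ⟨hL, hKL⟩)
  exact (isPreirreducible_iff_isClosed_union_isClosed.1 hX.2 _ _ isClosed_closure isClosed_closure
    hcover).imp (subset_of_cover J) (subset_of_cover K)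

theorem isGenericPoint_KK {X : Set (SIr M)} (hX : IsIrreducible X) (hcl : IsClosed X) :
    IsGenericPoint (⟨KK X, isStronglyIrr_KK hX⟩ : SIr M) X := by
  have hHK : HK X = X := by rw [← closure_eq_HK, hcl.closure_eq]
  ext L
  rw [mem_closure_singleton_iff, ← mem_HK_of_nonempty hX.nonempty, hHK]

instance : QuasiSober (SIr M) :=
  ⟨fun hX hcl => ⟨_, isGenericPoint_KK hX hcl⟩⟩

end SIr

theorem unique_generic_point_general (M : Type*) [CommMonoid M]
    (X : Set (SIr M)) (hirr : IsIrreducible X)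
    (hcl : IsClosed X) :
    ∃! I : SIr M, X = closure {I} := by
  obtain ⟨I, hI⟩ := QuasiSober.sober hirr hcl
  exact ⟨I, hI.symm, fun J hJ => IsGenericPoint.eq hJ.symm hI⟩

/-- every nonempty irreducible closed subset of the terminal
space has a unique generic point. -/
theorem unique_generic_point (M : Type*) [CommMonoid M]
    (X : Set (SIr M)) (hne : X.Nonempty) (hirr : IsIrreducible X)
    (hcl : IsClosed X) :
    ∃! I : SIr M, X = closure {I} :=
  unique_generic_point_general M X hirr hcl
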